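/- arXiv:2109.08856 — 2 statements merged into one kernel-verified Lean document; each statement's English description precedes it below -/
import Mathlib

section
/- There exists a preference profile on an assignment problem with n = 4 agents and 4 items such that no random assignment simultaneously satisfies ex-post favoring-eagerness-for-remaining-items (ex-post FERI) and sd-envy-freeness (sd-EF); consequently, no mechanism on this instance satisfies both properties. -/
open Finset

noncomputable section

namespace FeriPaper

/-- A preference profile: `R j o o'` means agent `j` strictly prefers item `o` to `o'`. -/
abbrev Pref (n : ℕ) := Fin n → Fin n → Fin n → Prop

/-- Every agent's preference is a strict linear (total) order on the items. -/
def IsProfile {n : ℕ} (R : Pref n) : Prop :=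
  ∀ j : Fin n, IsStrictTotalOrder (Fin n) (R j)

/-- Profiles as a type (for mechanisms). -/
def Profile (n : ℕ) := { R : Pref n // IsProfile R }

/-- `o` is agent `j`'s most preferred item in the set `S`. -/
def IsTopIn {n : ℕ} (R : Pref n) (j : Fin n) (S : Set (Fin n)) (o : Fin n) : Prop :=
  o ∈ S ∧ ∀ o' ∈ S, o' ≠ o → R j o o'

/-- `Tunion R A r` is the union `T_1(A) ∪ ⋯ ∪ T_r(A)` (so `Tunion R A 0 = ∅`). -/
def Tunion {n : ℕ} (R : Pref n) (A : Equiv.Perm (Fin n)) : ℕ → Set (Fin n)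
  | 0 => ∅
  | r + 1 =>
      Tunion R A r ∪
        {o | ∃ j : Fin n, A j ∉ Tunion R A r ∧ IsTopIn R j (Tunion R A r)ᶜ o}

/-- `Tset R A r` is the set `T_{r+1}(A)` (0-based round index). -/
def Tset {n : ℕ} (R : Pref n) (A : Equiv.Perm (Fin n)) (r : ℕ) : Set (Fin n) :=
  {o | ∃ j : Fin n, A j ∉ Tunion R A r ∧ IsTopIn R j (Tunion R A r)ᶜ o}

/-- Favoring-eagerness-for-remaining-items (FERI). -/
def FERI {n : ℕ} (R : Pref n) (A : Equiv.Perm (Fin n)) : Prop :=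
  ∀ r : ℕ, ∀ o ∈ Tset R A r, IsTopIn R (A.symm o) (Tunion R A r)ᶜ o

/-- Pareto efficiency (PE) of a deterministic assignment. -/
def ParetoEff {n : ℕ} (R : Pref n) (A : Equiv.Perm (Fin n)) : Prop :=
  ¬ ∃ (A' : Equiv.Perm (Fin n)) (N' : Set (Fin n)), N'.Nonempty ∧
      (∀ j ∈ N', R j (A' j) (A j)) ∧ ∀ k, k ∉ N' → A' k = A k

/-- Number of agents receiving their overall first choice. -/
def firstChoiceCount {n : ℕ} (R : Pref n) (A : Equiv.Perm (Fin n)) : ℕ :=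
  {j : Fin n | IsTopIn R j Set.univ (A j)}.ncard

/-- First-choice maximality (FCM). -/
def FCM {n : ℕ} (R : Pref n) (A : Equiv.Perm (Fin n)) : Prop :=
  ¬ ∃ A' : Equiv.Perm (Fin n), firstChoiceCount R A < firstChoiceCount R A'

/-- Rank of item `o` in agent `j`'s preference (1 = most preferred). -/
def rank {n : ℕ} (R : Pref n) (j o : Fin n) : ℕ :=
  {o' : Fin n | R j o' o ∨ o' = o}.ncard

/-- Favoring-higher-ranks (FHR). -/
def FHR {n : ℕ} (R : Pref n) (A : Equiv.Perm (Fin n)) : Prop :=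
  ∀ j k : Fin n, rank R j (A j) ≤ rank R k (A j) ∨ rank R k (A k) < rank R k (A j)

/-- Popularity (POP). -/
def POP {n : ℕ} (R : Pref n) (A : Equiv.Perm (Fin n)) : Prop :=
  ¬ ∃ A' : Equiv.Perm (Fin n),
      {j : Fin n | R j (A j) (A' j)}.ncard < {j : Fin n | R j (A' j) (A j)}.ncard

/-- Signature of a deterministic assignment: `signature R A r` is the number of agents
    assigned their `r`-th ranked item. -/
def signature {n : ℕ} (R : Pref n) (A : Equiv.Perm (Fin n)) (r : ℕ) : ℕ :=
  {j : Fin n | rank R j (A j) = r}.ncard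

/-- `x` dominates `y` as signatures. -/
def SigDom (x y : ℕ → ℕ) : Prop :=
  ∃ r : ℕ, y r < x r ∧ ∀ r' < r, y r' ≤ x r'

/-- Rank maximality (RM). -/
def RM {n : ℕ} (R : Pref n) (A : Equiv.Perm (Fin n)) : Prop :=
  ¬ ∃ A' : Equiv.Perm (Fin n), SigDom (signature R A') (signature R A)

/-- A random assignment: a doubly stochastic matrix. -/
def DoublyStochastic {n : ℕ} (P : Fin n → Fin n → ℝ) : Prop :=
  (∀ j o, 0 ≤ P j o) ∧ (∀ j, ∑ o, P j o = 1) ∧ (∀ o, ∑ j, P j o = 1)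

/-- The 0-1 permutation matrix of a deterministic assignment. -/
def permMatrix {n : ℕ} (A : Equiv.Perm (Fin n)) : Fin n → Fin n → ℝ :=
  fun j o => if A j = o then 1 else 0

/-- Upper contour set of item `o` under the strict preference `pr`. -/
def ucs {n : ℕ} (pr : Fin n → Fin n → Prop) (o : Fin n) : Set (Fin n) :=
  {x | pr x o ∨ x = o}

/-- Total probability mass on the upper contour set of `o`. -/
def upperSum {n : ℕ} (pr : Fin n → Fin n → Prop) (p : Fin n → ℝ) (o : Fin n) : ℝ :=
  ∑ x, (ucs pr o).indicator p x

/-- `p` (weakly) stochastically dominates `q` w.r.t. the strict preference `pr`. -/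
def SD {n : ℕ} (pr : Fin n → Fin n → Prop) (p q : Fin n → ℝ) : Prop :=
  ∀ o, upperSum pr q o ≤ upperSum pr p o

/-- sd-envy-freeness. -/
def sdEF {n : ℕ} (R : Pref n) (P : Fin n → Fin n → ℝ) : Prop :=
  ∀ j k : Fin n, SD (R j) (P j) (P k)

/-- sd-weak-envy-freeness. -/
def sdWEF {n : ℕ} (R : Pref n) (P : Fin n → Fin n → ℝ) : Prop :=
  ∀ j k : Fin n, SD (R j) (P k) (P j) → P j = P k

/-- The common prefix of the preferences of agents `j` and `k`: items all of whose
    (weak) upper contour sets w.r.t. `j` coincide for `j` and `k`. -/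
def commonPrefix {n : ℕ} (R : Pref n) (j k : Fin n) : Set (Fin n) :=
  {o | ∀ x ∈ ucs (R j) o, ucs (R j) x = ucs (R k) x}

/-- Strong equal treatment of equals (SETE). -/
def SETE {n : ℕ} (R : Pref n) (P : Fin n → Fin n → ℝ) : Prop :=
  ∀ j k : Fin n, ∀ o ∈ commonPrefix R j k, P j o = P k o

/-- A random assignment satisfies a property `X` ex post if it is a convex combination
    of (permutation matrices of) deterministic assignments each satisfying `X`. -/
def ExPost {n : ℕ} (X : Equiv.Perm (Fin n) → Prop) (P : Fin n → Fin n → ℝ) : Prop :=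
  ∃ w : Equiv.Perm (Fin n) → ℝ, (∀ A, 0 ≤ w A) ∧ (∑ A, w A) = 1 ∧
    (∀ A, w A ≠ 0 → X A) ∧ ∀ j o, P j o = ∑ A, w A * permMatrix A j o

/-- Ex-ante favoring-higher-ranks (ea-FHR). -/
def EaFHR {n : ℕ} (R : Pref n) (P : Fin n → Fin n → ℝ) : Prop :=
  ∀ j o, 0 < P j o → ∀ k, rank R k o < rank R j o → upperSum (R k) (P k) o = 1

/-- The eating structure for ea-FERI: `(eaState R P r).1 = M_{P,r+1}` and
    `(eaState R P r).2 o = ⋃_{r' ≤ r+1} E_{P,r'}(o)` (1-based indexing on the right). -/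
def eaState {n : ℕ} (R : Pref n) (P : Fin n → Fin n → ℝ) :
    ℕ → Set (Fin n) × (Fin n → Set (Fin n))
  | 0 => (Set.univ, fun o => {j | IsTopIn R j Set.univ o})
  | r + 1 =>
      let prev := eaState R P r
      let M : Set (Fin n) := {o | ∑ k, (prev.2 o).indicator (fun k' => P k' o) k < 1}
      (M, fun o => prev.2 o ∪ {j | IsTopIn R j M o})

/-- `eaM R P r = M_{P,r+1}` (0-based round index). -/
def eaM {n : ℕ} (R : Pref n) (P : Fin n → Fin n → ℝ) (r : ℕ) : Set (Fin n) :=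
  (eaState R P r).1

/-- `eaE R P r o = E_{P,r+1}(o)` (0-based round index). -/
def eaE {n : ℕ} (R : Pref n) (P : Fin n → Fin n → ℝ) (r : ℕ) (o : Fin n) : Set (Fin n) :=
  {j | IsTopIn R j (eaM R P r) o}

/-- Ex-ante FERI (ea-FERI). -/
def EaFERI {n : ℕ} (R : Pref n) (P : Fin n → Fin n → ℝ) : Prop :=
  ∀ r : ℕ, ∀ o ∈ eaM R P r, ∀ j : Fin n, (∃ r' < r, j ∈ eaE R P r' o) →
    upperSum (R j) (P j) o = 1

/-- sd-Pareto-efficiency (sd-PE). -/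
def SdPE {n : ℕ} (R : Pref n) (P : Fin n → Fin n → ℝ) : Prop :=
  ¬ ∃ Q : Fin n → Fin n → ℝ, DoublyStochastic Q ∧ Q ≠ P ∧ ∀ j, SD (R j) (Q j) (P j)

/-- `A` is the output of the adaptive Boston mechanism with priority order `prio`
    (`prio j k` means `j` has higher priority than `k`): in every round, every item that
    receives applicants is assigned to its highest-priority applicant. -/
def ABMOutcome {n : ℕ} (prio : Fin n → Fin n → Prop) (R : Pref n)
    (A : Equiv.Perm (Fin n)) : Prop :=
  ∀ r : ℕ, ∀ o ∈ Tset R A r,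
    IsTopIn R (A.symm o) (Tunion R A r)ᶜ o ∧
      ∀ j : Fin n, A j ∉ Tunion R A r → IsTopIn R j (Tunion R A r)ᶜ o →
        j ≠ A.symm o → prio (A.symm o) j

end FeriPaper


namespace FeriPaper

/-- Rank table for the counterexample: agents 0,1,2 rank `0 ≻ 1 ≻ 2 ≻ 3`,
agent 3 ranks `0 ≻ 2 ≻ 1 ≻ 3`. -/
def prm : Fin 4 → Fin 4 → Fin 4 :=
  ![![0, 1, 2, 3], ![0, 1, 2, 3], ![0, 1, 2, 3], ![0, 2, 1, 3]]

/-- The counterexample profile. -/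
def Rex : Pref 4 := fun j o o' => prm j o < prm j o'

instance RexDec (j a b : Fin 4) : Decidable (Rex j a b) :=
  inferInstanceAs (Decidable (prm j a < prm j b))

lemma Rex_profile : IsProfile Rex := by
  intro j
  exact { trichotomous := by revert j; decide
          irrefl := by revert j; decide
          trans := by revert j; decide }

lemma Tunion_one (A : Equiv.Perm (Fin 4)) : Tunion Rex A 1 = {(0 : Fin 4)} := by
  have key : ∀ o : Fin 4,
      (∃ j : Fin 4, ∀ o' : Fin 4, o' ≠ o → Rex j o o') ↔ o = 0 := by decide
  ext o
  simp only [Tunion, IsTopIn, Set.mem_union, Set.mem_empty_iff_false, Set.mem_setOf_eq,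
    Set.notMem_empty, Set.compl_empty, Set.mem_univ, not_false_eq_true, true_and,
    forall_true_left, false_or, Set.mem_singleton_iff, true_implies]
  exact key o

lemma feri_ne (A : Equiv.Perm (Fin 4)) (h : FERI Rex A) : A 3 ≠ 3 := by
  intro hA3
  have hmem : (2 : Fin 4) ∈ Tset Rex A 1 := by
    refine ⟨3, ?_, ?_⟩
    · rw [Tunion_one, hA3]
      simp only [Set.mem_singleton_iff]
      decide
    · rw [Tunion_one]
      constructor
      · simp only [Set.mem_compl_iff, Set.mem_singleton_iff]; decide
      · intro o' ho' hne
        simp only [Set.mem_compl_iff, Set.mem_singleton_iff] at ho'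
        revert ho' hne; revert o'; decide
  have htop := h 1 2 hmem
  rw [Tunion_one] at htop
  have h1 : (1 : Fin 4) ∈ ({(0 : Fin 4)} : Set (Fin 4))ᶜ := by
    simp only [Set.mem_compl_iff, Set.mem_singleton_iff]; decide
  have hR : Rex (A.symm 2) 2 1 := htop.2 1 h1 (by decide)
  have hs : A.symm 2 ≠ 3 := by
    intro he
    have : A 3 = 2 := by rw [← he]; exact A.apply_symm_apply 2
    rw [hA3] at this
    exact absurd this (by decide)
  have hall : ∀ j : Fin 4, j ≠ 3 → ¬ Rex j 2 1 := by decide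
  exact hall _ hs hR

lemma usum3 (j : Fin 4) (hj : j ≠ 3) (p : Fin 4 → ℝ) :
    upperSum (Rex j) p 2 = p 0 + p 1 + p 2 := by
  have key : ∀ x : Fin 4, (x ∈ ucs (Rex j) 2) ↔ (x = 0 ∨ x = 1 ∨ x = 2) := by
    intro x
    show (Rex j x 2 ∨ x = 2) ↔ _
    revert hj x; revert j; decide
  rw [upperSum, Fin.sum_univ_four]
  rw [Set.indicator_of_mem ((key 0).2 (by decide)) p,
      Set.indicator_of_mem ((key 1).2 (by decide)) p,
      Set.indicator_of_mem ((key 2).2 (by decide)) p,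
      Set.indicator_of_notMem (fun hx => by revert hx; rw [key 3]; decide) p]
  ring

/-- On some 4-agent instance, no random assignment satisfies
ex-post FERI and sd-EF simultaneously. -/
theorem no_epFERI_sdEF :
    ∃ R : Pref 4, IsProfile R ∧
      ∀ P : Fin 4 → Fin 4 → ℝ, DoublyStochastic P →
        ¬ (ExPost (FERI R) P ∧ sdEF R P) := by
  refine ⟨Rex, Rex_profile, ?_⟩
  rintro P hDS ⟨⟨w, hw0, hw1, hX, hP⟩, hEF⟩
  have h33 : P 3 3 = 0 := by
    rw [hP 3 3]
    apply Finset.sum_eq_zero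
    intro A _
    by_cases hw : w A = 0
    · simp [hw]
    · have hne := feri_ne A (hX A hw)
      simp [permMatrix, hne]
  have hrow : ∀ j : Fin 4, P j 0 + P j 1 + P j 2 + P j 3 = 1 := by
    intro j
    have := hDS.2.1 j
    rwa [Fin.sum_univ_four] at this
  have hcol : P 0 3 + P 1 3 + P 2 3 + P 3 3 = 1 := by
    have := hDS.2.2 3
    rwa [Fin.sum_univ_four] at this
  have hle : ∀ j : Fin 4, j ≠ 3 → P j 3 ≤ P 3 3 := by
    intro j hj
    have h := hEF j 3 2
    rw [usum3 j hj (P 3), usum3 j hj (P j)] at h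
    have h1 := hrow j
    have h2 := hrow 3
    linarith
  have e0 := hle 0 (by decide)
  have e1 := hle 1 (by decide)
  have e2 := hle 2 (by decide)
  linarith

end FeriPaper
end
end

section
/- There exists a preference profile on an assignment problem with n = 4 agents and 4 items such that no random assignment simultaneously satisfies ex-ante favoring-eagerness-for-remaining-items (ea-FERI) and sd-envy-freeness (sd-EF); consequently, no mechanism on this instance satisfies both properties. -/
open Finset

noncomputable section

namespace FeriPaper

def rkT : Fin 4 → Fin 4 → Fin 4 := ![![0,3,1,2], ![0,2,1,3], ![0,3,2,1], ![3,0,1,2]]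
def myR : Pref 4 := fun j o o' => rkT j o < rkT j o'
instance (j o o' : Fin 4) : Decidable (myR j o o') :=
  inferInstanceAs (Decidable (rkT j o < rkT j o'))

lemma myR_profile : IsProfile myR := by
  intro j
  exact { trichotomous := by revert j; decide
          irrefl := by revert j; decide
          trans := by revert j; decide }

lemma upperSum_myR (j : Fin 4) (p : Fin 4 → ℝ) (o : Fin 4) :
    upperSum (myR j) p o =
      (if myR j 0 o ∨ (0:Fin 4) = o then p 0 else 0) +
      (if myR j 1 o ∨ (1:Fin 4) = o then p 1 else 0) +
      (if myR j 2 o ∨ (2:Fin 4) = o then p 2 else 0) +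
      (if myR j 3 o ∨ (3:Fin 4) = o then p 3 else 0) := by
  simp [upperSum, ucs, Set.indicator_apply, Set.mem_setOf_eq, Fin.sum_univ_four]

lemma us00 (p : Fin 4 → ℝ) : upperSum (myR 0) p 0 = p 0 := by
  rw [upperSum_myR, if_pos (by decide), if_neg (by decide), if_neg (by decide),
    if_neg (by decide)]; ring
lemma us10 (p : Fin 4 → ℝ) : upperSum (myR 1) p 0 = p 0 := by
  rw [upperSum_myR, if_pos (by decide), if_neg (by decide), if_neg (by decide),
    if_neg (by decide)]; ring
lemma us20 (p : Fin 4 → ℝ) : upperSum (myR 2) p 0 = p 0 := by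
  rw [upperSum_myR, if_pos (by decide), if_neg (by decide), if_neg (by decide),
    if_neg (by decide)]; ring
lemma us31 (p : Fin 4 → ℝ) : upperSum (myR 3) p 1 = p 1 := by
  rw [upperSum_myR, if_neg (by decide), if_pos (by decide), if_neg (by decide),
    if_neg (by decide)]; ring
lemma us23 (p : Fin 4 → ℝ) : upperSum (myR 2) p 3 = p 0 + p 3 := by
  rw [upperSum_myR, if_pos (by decide), if_neg (by decide), if_neg (by decide),
    if_pos (by decide)]; ring
lemma us02 (p : Fin 4 → ℝ) : upperSum (myR 0) p 2 = p 0 + p 2 := by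
  rw [upperSum_myR, if_pos (by decide), if_neg (by decide), if_pos (by decide),
    if_neg (by decide)]; ring
lemma us12 (p : Fin 4 → ℝ) : upperSum (myR 1) p 2 = p 0 + p 2 := by
  rw [upperSum_myR, if_pos (by decide), if_neg (by decide), if_pos (by decide),
    if_neg (by decide)]; ring
lemma us11 (p : Fin 4 → ℝ) : upperSum (myR 1) p 1 = p 0 + p 1 + p 2 := by
  rw [upperSum_myR, if_pos (by decide), if_pos (by decide), if_pos (by decide),
    if_neg (by decide)]; ring

lemma topUniv (j o : Fin 4) : IsTopIn myR j Set.univ o ↔ ∀ o', o' ≠ o → myR j o o' := by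
  simp [IsTopIn]

lemma hset0 : {j | IsTopIn myR j Set.univ (0:Fin 4)} = {j : Fin 4 | j = 0 ∨ j = 1 ∨ j = 2} := by
  ext j; rw [Set.mem_setOf_eq, Set.mem_setOf_eq, topUniv]; revert j; decide
lemma hset1 : {j | IsTopIn myR j Set.univ (1:Fin 4)} = {j : Fin 4 | j = 3} := by
  ext j; rw [Set.mem_setOf_eq, Set.mem_setOf_eq, topUniv]; revert j; decide
lemma hset2 : {j | IsTopIn myR j Set.univ (2:Fin 4)} = (∅ : Set (Fin 4)) := by
  ext j; rw [Set.mem_setOf_eq, topUniv]; revert j; decide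
lemma hset3 : {j | IsTopIn myR j Set.univ (3:Fin 4)} = (∅ : Set (Fin 4)) := by
  ext j; rw [Set.mem_setOf_eq, topUniv]; revert j; decide


-- eaM at stage 1 and 2 membership, definitional
lemma mem_eaM_one (P : Fin 4 → Fin 4 → ℝ) (o : Fin 4) :
    o ∈ eaM myR P 1 ↔
      ∑ k, ({j | IsTopIn myR j Set.univ o}).indicator (fun k' => P k' o) k < 1 :=
  Iff.rfl

lemma mem_eaM_two (P : Fin 4 → Fin 4 → ℝ) (o : Fin 4) :
    o ∈ eaM myR P 2 ↔
      ∑ k, (({j | IsTopIn myR j Set.univ o} ∪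
        {j | IsTopIn myR j (eaM myR P 1) o})).indicator (fun k' => P k' o) k < 1 :=
  Iff.rfl

lemma eaM_zero (P : Fin 4 → Fin 4 → ℝ) : eaM myR P 0 = Set.univ := rfl

lemma topPair (j o : Fin 4) :
    IsTopIn myR j {x : Fin 4 | x = 2 ∨ x = 3} o ↔
      ((o = 2 ∨ o = 3) ∧ ∀ o', (o' = 2 ∨ o' = 3) → o' ≠ o → myR j o o') :=
  Iff.rfl

/-- On some 4-agent instance, no random assignment satisfies
ea-FERI and sd-EF simultaneously. -/
theorem no_eaFERI_sdEF :
    ∃ R : Pref 4, IsProfile R ∧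
      ∀ P : Fin 4 → Fin 4 → ℝ, DoublyStochastic P →
        ¬ (EaFERI R P ∧ sdEF R P) := by
  refine ⟨myR, myR_profile, ?_⟩
  rintro P ⟨hpos, hrow, hcol⟩ ⟨hF, hE⟩
  have hc0 := hcol 0; have hc1 := hcol 1; have hc2 := hcol 2
  have hr2 := hrow 2; have hr3 := hrow 3
  rw [Fin.sum_univ_four] at hc0 hc1 hc2 hr2 hr3
  -- stage-1 indicator sums
  have hsum0 : ∑ k, ({j | IsTopIn myR j Set.univ (0:Fin 4)}).indicator (fun k' => P k' 0) k
      = P 0 0 + P 1 0 + P 2 0 := by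
    rw [hset0]; simp [Fin.sum_univ_four, Set.indicator_apply, Set.mem_setOf_eq]
  have hsum1 : ∑ k, ({j | IsTopIn myR j Set.univ (1:Fin 4)}).indicator (fun k' => P k' 1) k
      = P 3 1 := by
    rw [hset1]; simp [Fin.sum_univ_four, Set.indicator_apply, Set.mem_setOf_eq]
  have hsum2 : ∑ k, ({j | IsTopIn myR j Set.univ (2:Fin 4)}).indicator (fun k' => P k' 2) k
      = 0 := by rw [hset2]; simp
  have hsum3 : ∑ k, ({j | IsTopIn myR j Set.univ (3:Fin 4)}).indicator (fun k' => P k' 3) k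
      = 0 := by rw [hset3]; simp
  -- item 1: agent 3 gets all of it
  have h1not : (1:Fin 4) ∉ eaM myR P 1 := by
    intro h
    have htop : (3:Fin 4) ∈ eaE myR P 0 1 := by
      show IsTopIn myR 3 (eaM myR P 0) 1
      rw [eaM_zero]; exact (topUniv 3 1).2 (by decide)
    have h31 := hF 1 1 h 3 ⟨0, by norm_num, htop⟩
    rw [us31] at h31
    have hm := (mem_eaM_one P 1).1 h
    rw [hsum1] at hm
    linarith
  have h31ge : (1:ℝ) ≤ P 3 1 := by
    by_contra hlt; push_neg at hlt
    exact h1not ((mem_eaM_one P 1).2 (by rw [hsum1]; linarith))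
  have p31 : P 3 1 = 1 := le_antisymm (by linarith [hpos 0 1, hpos 1 1, hpos 2 1]) h31ge
  have p30 : P 3 0 = 0 := by linarith [hpos 3 0, hpos 3 2, hpos 3 3]
  have p32 : P 3 2 = 0 := by linarith [hpos 3 0, hpos 3 2, hpos 3 3]
  have p01 : P 0 1 = 0 := by linarith [hpos 0 1, hpos 1 1, hpos 2 1]
  have p11 : P 1 1 = 0 := by linarith [hpos 0 1, hpos 1 1, hpos 2 1]
  have p21 : P 2 1 = 0 := by linarith [hpos 0 1, hpos 1 1, hpos 2 1]
  -- item 0: agents 0,1,2 get all of it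
  have h0not : (0:Fin 4) ∉ eaM myR P 1 := by
    intro h
    have ht0 : (0:Fin 4) ∈ eaE myR P 0 0 := by
      show IsTopIn myR 0 (eaM myR P 0) 0
      rw [eaM_zero]; exact (topUniv 0 0).2 (by decide)
    have ht1 : (1:Fin 4) ∈ eaE myR P 0 0 := by
      show IsTopIn myR 1 (eaM myR P 0) 0
      rw [eaM_zero]; exact (topUniv 1 0).2 (by decide)
    have e0 := hF 1 0 h 0 ⟨0, by norm_num, ht0⟩
    have e1 := hF 1 0 h 1 ⟨0, by norm_num, ht1⟩
    rw [us00] at e0; rw [us10] at e1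
    linarith [hpos 2 0, hpos 3 0]
  have hge0 : (1:ℝ) ≤ P 0 0 + P 1 0 + P 2 0 := by
    by_contra hlt; push_neg at hlt
    exact h0not ((mem_eaM_one P 0).2 (by rw [hsum0]; linarith))
  -- equal thirds by sd-EF at item 0
  have e01 := hE 0 1 0; rw [us00, us00] at e01
  have e10 := hE 1 0 0; rw [us10, us10] at e10
  have e02 := hE 0 2 0; rw [us00, us00] at e02
  have e20 := hE 2 0 0; rw [us20, us20] at e20
  have p00 : P 0 0 = 1/3 := by linarith
  have p10 : P 1 0 = 1/3 := by linarith
  have p20 : P 2 0 = 1/3 := by linarith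
  -- items 2,3 remain at stage 1
  have h2mem : (2:Fin 4) ∈ eaM myR P 1 := (mem_eaM_one P 2).2 (by rw [hsum2]; norm_num)
  have h3mem : (3:Fin 4) ∈ eaM myR P 1 := (mem_eaM_one P 3).2 (by rw [hsum3]; norm_num)
  -- agent 2 is the unique stage-2 eater of item 3
  have h2E : (2:Fin 4) ∈ eaE myR P 1 3 := by
    show IsTopIn myR 2 (eaM myR P 1) 3
    refine ⟨h3mem, ?_⟩
    intro o' ho' hne
    fin_cases o'
    · exact absurd ho' h0not
    · exact absurd ho' h1not
    · decide
    · exact absurd rfl hne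
  have hE2set : {j | IsTopIn myR j (eaM myR P 1) 3} = {j : Fin 4 | j = 2} := by
    ext j
    simp only [Set.mem_setOf_eq]
    constructor
    · intro hj
      have h2 := hj.2 2 h2mem (by decide)
      fin_cases j
      · exact absurd h2 (by decide)
      · exact absurd h2 (by decide)
      · rfl
      · exact absurd h2 (by decide)
    · rintro rfl; exact h2E
  -- item 3 remains at stage 2
  have hsumU : ∑ k, (({j | IsTopIn myR j Set.univ (3:Fin 4)} ∪
      {j | IsTopIn myR j (eaM myR P 1) 3})).indicator (fun k' => P k' 3) k = P 2 3 := by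
    rw [hset3, hE2set, Set.empty_union]
    simp [Fin.sum_univ_four, Set.indicator_apply, Set.mem_setOf_eq]
  have h3mem2 : (3:Fin 4) ∈ eaM myR P 2 :=
    (mem_eaM_two P 3).2 (by rw [hsumU]; linarith [hpos 2 2])
  have hu23 := hF 2 3 h3mem2 2 ⟨1, by norm_num, h2E⟩
  rw [us23] at hu23
  have p23 : P 2 3 = 2/3 := by linarith
  have p22 : P 2 2 = 0 := by linarith
  -- sd-EF at item 2 forces halves
  have e01' := hE 0 1 2; rw [us02, us02] at e01'
  have e10' := hE 1 0 2; rw [us12, us12] at e10'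
  have p12 : P 1 2 = 1/2 := by linarith
  -- agent 1 envies agent 3
  have efin := hE 1 3 1; rw [us11, us11] at efin
  linarith

end FeriPaper
end
end
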